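/- For a selfadjoint compact operator A on a Hilbert space, the positive and negative eigenvalue sequences satisfy the Ky Fan type inequality λ±_{j+k}(A+B) ≤ λ±_j(A) + λ±_k(B) for selfadjoint compact operators A, B and all j, k ≥ 0. -/

import Mathlib

open Filter Topology

variable {H : Type*} [NormedAddCommGroup H] [InnerProductSpace ℂ H] [CompleteSpace H]

/-- The `j`-th singular value of a bounded operator (approximation number):
for compact operators this is the `(j+1)`-th eigenvalue of `|T|` in decreasing order. -/
noncomputable def mu (T : H →L[ℂ] H) (j : ℕ) : ℝ :=
  sInf {c : ℝ | ∃ F : H →L[ℂ] H, FiniteDimensional ℂ (LinearMap.range F.toLinearMap) ∧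
    Module.finrank ℂ (LinearMap.range F.toLinearMap) ≤ j ∧ c = ‖T - F‖}

/-- `λ⁺_j(A)`: the `j`-th eigenvalue (decreasing, with multiplicity) of the positive part
`A⁺ = (|A|+A)/2` of the selfadjoint operator `A`. -/
noncomputable def lamP (A : H →L[ℂ] H) (j : ℕ) : ℝ := mu (A⁺) j

/-- `λ⁻_j(A)`: the `j`-th eigenvalue (decreasing, with multiplicity) of the negative part
`A⁻ = (|A|-A)/2` of the selfadjoint operator `A`. -/
noncomputable def lamM (A : H →L[ℂ] H) (j : ℕ) : ℝ := mu (A⁻) j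


/-!
Approximation numbers are subadditive, `μ_{j+k}(X + Z) ≤ μ_j(X) + μ_k(Z)` (add the approximants),
do not increase under `Y ↦ C Y D` for contractions `C, D`, and are monotone on positive
operators: if `0 ≤ S ≤ T`, `s = √S` and `rank F ≤ j`, then `s` is bounded by `√‖T - F‖` on
`ker F`, hence on the orthogonal complement of `V = s((ker F)ᗮ)`, so `s P_V s` approximates `S`
within `‖T - F‖` with rank `≤ j`.

Taking positive parts is not monotone, but for `x = A + B ≤ A⁺ + B⁺` and `C = g(x)`, with `g` a
continuous cut-off equal to `0` on `(-∞, 0]` and to `1` on `[ε, ∞)`, one has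
`x⁺ ≤ C x C + ε ≤ C (A⁺ + B⁺) C + ε`, whence `λ⁺_{j+k}(A + B) ≤ λ⁺_j(A) + λ⁺_k(B) + ε`.
The negative parts follow from `A⁻ = (-A)⁺`.
-/

open scoped InnerProductSpace

section OrthogonalComplements

variable {𝕜 E : Type*} [RCLike 𝕜] [NormedAddCommGroup E] [InnerProductSpace 𝕜 E]

theorem LinearMap.finrank_orthogonal_ker_le {E' : Type*} [AddCommGroup E'] [Module 𝕜 E']
    (f : E →ₗ[𝕜] E') [FiniteDimensional 𝕜 (LinearMap.range f)] :
    FiniteDimensional 𝕜 (LinearMap.ker f)ᗮ ∧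
      Module.finrank 𝕜 (LinearMap.ker f)ᗮ ≤ Module.finrank 𝕜 (LinearMap.range f) := by
  set g := (f.domRestrict (LinearMap.ker f)ᗮ).codRestrict (LinearMap.range f)
    fun x => LinearMap.mem_range_self f x
  have hg : Function.Injective g := fun x y hxy =>
    LinearMap.injective_domRestrict_iff.mpr (Submodule.orthogonal_disjoint _).symm
      (congrArg Subtype.val hxy)
  exact ⟨Module.Finite.of_injective g hg, LinearMap.finrank_le_finrank_of_injective hg⟩

theorem norm_apply_le_of_mem_orthogonal_map [CompleteSpace E] {s : E →L[𝕜] E}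
    (hs : IsSelfAdjoint s) {K : Submodule 𝕜 E} [K.HasOrthogonalProjection] {r : ℝ} (hr : 0 ≤ r)
    (hK : ∀ ζ ∈ K, ‖s ζ‖ ≤ r * ‖ζ‖) {η : E} (hη : η ∈ (Kᗮ.map s.toLinearMap)ᗮ) :
    ‖s η‖ ≤ r * ‖η‖ := by
  have hsη : s η ∈ K := by
    rw [← K.orthogonal_orthogonal]
    exact fun w hw => (hs.isSymmetric w η).symm.trans (hη _ ⟨w, hw, rfl⟩)
  have : ‖s η‖ ^ 2 ≤ ‖η‖ * (r * ‖s η‖) := calc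
    ‖s η‖ ^ 2 = RCLike.re ⟪η, s (s η)⟫_𝕜 := by
      rw [← inner_self_eq_norm_sq (𝕜 := 𝕜)]
      exact congrArg _ (hs.isSymmetric η (s η))
    _ ≤ ‖η‖ * ‖s (s η)‖ := re_inner_le_norm _ _
    _ ≤ ‖η‖ * (r * ‖s η‖) := by gcongr; exact hK _ hsη
  rcases (norm_nonneg (s η)).eq_or_lt with h0 | h0
  · rw [← h0]
    positivity
  · nlinarith [norm_nonneg η]

end OrthogonalComplements

lemma posPart_le_clamp_mul_self_add (t : ℝ) {ε : ℝ} (hε : 0 < ε) :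
    t⁺ ≤ min (max (t / ε) 0) 1 * t * min (max (t / ε) 0) 1 + ε := by
  rw [posPart_def]
  rcases le_or_gt t 0 with ht | ht
  · have : t / ε ≤ 0 := div_nonpos_of_nonpos_of_nonneg ht hε.le
    simp [ht, this, hε.le]
  rcases le_or_gt t ε with htε | htε
  · have hg : 0 ≤ min (max (t / ε) 0) 1 := by positivity
    have : max t 0 ≤ ε := max_le htε hε.le
    nlinarith [mul_nonneg (mul_nonneg hg ht.le) hg]
  · have : 1 ≤ t / ε := (one_le_div hε).mpr htε.le
    rw [max_eq_left ht.le, max_eq_left (zero_le_one.trans this), min_eq_right this]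
    linarith

theorem exists_posPart_le_conj_add {A : Type*} [CStarAlgebra A] [PartialOrder A]
    [StarOrderedRing A] {x : A} (hx : IsSelfAdjoint x) {ε : ℝ} (hε : 0 < ε) :
    ∃ C : A, IsSelfAdjoint C ∧ ‖C‖ ≤ 1 ∧ x⁺ ≤ C * x * C + algebraMap ℝ A ε := by
  set g : ℝ → ℝ := fun t => min (max (t / ε) 0) 1
  have hg : Continuous g := by fun_prop
  have hg_mem (t : ℝ) : 0 ≤ g t ∧ g t ≤ 1 := ⟨by positivity, min_le_right _ _⟩
  refine ⟨cfc g x, cfc_predicate g x, norm_cfc_le zero_le_one fun t _ => ?_, ?_⟩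
  · rw [Real.norm_eq_abs, abs_of_nonneg (hg_mem t).1]; exact (hg_mem t).2
  have hconj : cfc (fun t => g t * t * g t) x = cfc g x * x * cfc g x := by
    rw [cfc_mul _ _ x (by fun_prop) (by fun_prop), cfc_mul _ _ x (by fun_prop) (by fun_prop),
      cfc_id' ℝ x hx]
  rw [← hconj, ← cfc_const ε x hx, ← cfc_add .., CFC.posPart_def, cfcₙ_eq_cfc]
  exact cfc_mono fun t _ => posPart_le_clamp_mul_self_add t hε

section SingularValues

omit [CompleteSpace H]

lemma mu_le_of_range_le {T F : H →L[ℂ] H} {U : Submodule ℂ H} [FiniteDimensional ℂ U] {j : ℕ}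
    (hFU : LinearMap.range F.toLinearMap ≤ U) (hU : Module.finrank ℂ U ≤ j) :
    mu T j ≤ ‖T - F‖ := by
  have := Submodule.finiteDimensional_of_le hFU
  exact csInf_le ⟨0, fun c ⟨_, _, _, hc⟩ => hc ▸ norm_nonneg _⟩
    ⟨F, this, (Submodule.finrank_mono hFU).trans hU, rfl⟩

lemma mu_le_norm (T : H →L[ℂ] H) (j : ℕ) : mu T j ≤ ‖T‖ := by
  simpa using mu_le_of_range_le (T := T) (F := 0) (U := ⊥) (by simp) (by simp)

lemma le_mu {T : H →L[ℂ] H} {j : ℕ} {c : ℝ}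
    (h : ∀ F : H →L[ℂ] H, FiniteDimensional ℂ (LinearMap.range F.toLinearMap) →
      Module.finrank ℂ (LinearMap.range F.toLinearMap) ≤ j → c ≤ ‖T - F‖) :
    c ≤ mu T j := by
  have h0 : LinearMap.range (0 : H →L[ℂ] H).toLinearMap = ⊥ := by simp
  refine le_csInf ⟨_, 0, ?_, by rw [h0]; simp, rfl⟩ fun _ ⟨F, hF, hFj, hc⟩ => hc ▸ h F hF hFj
  rw [h0]; infer_instance

lemma mu_add_le (X Z : H →L[ℂ] H) (j k : ℕ) : mu (X + Z) (j + k) ≤ mu X j + mu Z k := by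
  suffices mu (X + Z) (j + k) - mu Z k ≤ mu X j by linarith
  refine le_mu fun F _ hF => ?_
  suffices mu (X + Z) (j + k) - ‖X - F‖ ≤ mu Z k by linarith
  refine le_mu fun G _ hG => ?_
  have hrange : Module.finrank ℂ ↥(LinearMap.range F.toLinearMap ⊔ LinearMap.range G.toLinearMap)
      ≤ j + k := (Submodule.finrank_add_le_finrank_add_finrank _ _).trans (add_le_add hF hG)
  have hFG := mu_le_of_range_le (T := X + Z) (F := F + G) (LinearMap.range_add_le _ _) hrange
  rw [add_sub_add_comm] at hFG
  linarith [norm_add_le (X - F) (Z - G)]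

lemma mu_mul_mul_le {C D : H →L[ℂ] H} (hC : ‖C‖ ≤ 1) (hD : ‖D‖ ≤ 1) (Y : H →L[ℂ] H) (n : ℕ) :
    mu (C * Y * D) n ≤ mu Y n := by
  refine le_mu fun F _ hF => ?_
  have hrange : LinearMap.range (C * F * D).toLinearMap ≤
      (LinearMap.range F.toLinearMap).map C.toLinearMap := by
    rintro _ ⟨x, rfl⟩
    exact ⟨F (D x), LinearMap.mem_range_self _ _, rfl⟩
  calc mu (C * Y * D) n
      ≤ ‖C * Y * D - C * F * D‖ :=
        mu_le_of_range_le hrange ((Submodule.finrank_map_le _ _).trans hF)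
    _ = ‖C * (Y - F) * D‖ := by rw [mul_sub, sub_mul]
    _ ≤ ‖C‖ * ‖Y - F‖ * ‖D‖ := norm_mul₃_le
    _ ≤ 1 * ‖Y - F‖ * 1 := by gcongr
    _ = ‖Y - F‖ := by ring

lemma mu_add_le_add_norm (Z W : H →L[ℂ] H) (n : ℕ) : mu (Z + W) n ≤ mu Z n + ‖W‖ := by
  simpa using (mu_add_le Z W n 0).trans (by gcongr; exact mu_le_norm W 0)

end SingularValues

lemma mu_mul_star_le_sq {s : H →L[ℂ] H} {V : Submodule ℂ H} [FiniteDimensional ℂ V] {n : ℕ}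
    (hV : Module.finrank ℂ V ≤ n) {r : ℝ} (hr : 0 ≤ r) (hs : ∀ η ∈ Vᗮ, ‖s η‖ ≤ r * ‖η‖) :
    mu (s * star s) n ≤ r ^ 2 := by
  set Q := Vᗮ.starProjection
  have hQ : IsStarProjection Q := isStarProjection_starProjection
  have hrange : LinearMap.range (s * V.starProjection * star s).toLinearMap ≤
      V.map s.toLinearMap := by
    rintro _ ⟨x, rfl⟩
    exact ⟨_, V.starProjection_apply_mem (star s x), rfl⟩
  have hsQ : ‖s * Q‖ ≤ r := by
    refine ContinuousLinearMap.opNorm_le_bound _ hr fun ξ => ?_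
    calc ‖s (Q ξ)‖ ≤ r * ‖Q ξ‖ := hs _ (Vᗮ.starProjection_apply_mem ξ)
      _ ≤ r * ‖ξ‖ := by gcongr; exact Vᗮ.norm_starProjection_apply_le ξ
  have hdiff : s * star s - s * V.starProjection * star s = (s * Q) * star (s * Q) := by
    rw [star_mul, hQ.isSelfAdjoint.star_eq, ← mul_assoc, mul_assoc s Q Q, hQ.isIdempotentElem.eq,
      show Q = 1 - V.starProjection from V.starProjection_orthogonal', mul_sub, sub_mul, mul_one]
  calc mu (s * star s) n ≤ ‖s * star s - s * V.starProjection * star s‖ :=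
        mu_le_of_range_le hrange ((Submodule.finrank_map_le _ _).trans hV)
    _ = ‖s * Q‖ ^ 2 := by rw [hdiff, CStarRing.norm_self_mul_star, sq]
    _ ≤ r ^ 2 := by gcongr

lemma sq_norm_sqrt_apply_le {S T : H →L[ℂ] H} (hS : 0 ≤ S) (hST : S ≤ T) (ζ : H) :
    ‖CFC.sqrt S ζ‖ ^ 2 ≤ RCLike.re ⟪T ζ, ζ⟫_ℂ := by
  have hs : IsSelfAdjoint (CFC.sqrt S) := (CFC.sqrt_nonneg S).isSelfAdjoint
  have hTS := hST.re_inner_nonneg_left ζ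
  rw [sub_apply, inner_sub_left, map_sub, sub_nonneg] at hTS
  calc ‖CFC.sqrt S ζ‖ ^ 2 = RCLike.re ⟪CFC.sqrt S (CFC.sqrt S ζ), ζ⟫_ℂ := by
        rw [← inner_self_eq_norm_sq (𝕜 := ℂ)]
        exact congrArg _ (hs.isSymmetric _ ζ).symm
    _ = RCLike.re ⟪S ζ, ζ⟫_ℂ := by
        conv_rhs => rw [← CFC.sqrt_mul_sqrt_self S hS]
        rfl
    _ ≤ RCLike.re ⟪T ζ, ζ⟫_ℂ := hTS

lemma mu_le_mu {S T : H →L[ℂ] H} (hS : 0 ≤ S) (hST : S ≤ T) (n : ℕ) : mu S n ≤ mu T n := by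
  refine le_mu fun F _ hF => ?_
  set s := CFC.sqrt S
  have hs : IsSelfAdjoint s := (CFC.sqrt_nonneg S).isSelfAdjoint
  set c := ‖T - F‖
  have hc : 0 ≤ c := norm_nonneg _
  have hker : ∀ ζ ∈ LinearMap.ker F.toLinearMap, ‖s ζ‖ ≤ √c * ‖ζ‖ := by
    intro ζ hζ
    refine le_of_pow_le_pow_left₀ two_ne_zero (by positivity) ?_
    calc ‖s ζ‖ ^ 2 ≤ RCLike.re ⟪T ζ, ζ⟫_ℂ := sq_norm_sqrt_apply_le hS hST ζ
      _ = RCLike.re ⟪(T - F) ζ, ζ⟫_ℂ := by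
        rw [sub_apply, show F ζ = 0 from hζ, sub_zero]
      _ ≤ ‖(T - F) ζ‖ * ‖ζ‖ := re_inner_le_norm _ _
      _ ≤ c * ‖ζ‖ * ‖ζ‖ := by gcongr; exact (T - F).le_opNorm ζ
      _ = (√c * ‖ζ‖) ^ 2 := by rw [mul_pow, Real.sq_sqrt hc]; ring
  have : CompleteSpace (LinearMap.ker F.toLinearMap) := F.isClosed_ker.completeSpace_coe
  obtain ⟨_, hrank⟩ := F.toLinearMap.finrank_orthogonal_ker_le
  calc mu S n = mu (s * star s) n := by rw [hs.star_eq, CFC.sqrt_mul_sqrt_self S hS]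
    _ ≤ √c ^ 2 :=
      mu_mul_star_le_sq ((Submodule.finrank_map_le _ _).trans (hrank.trans hF))
        (Real.sqrt_nonneg c) fun η hη => norm_apply_le_of_mem_orthogonal_map hs
          (Real.sqrt_nonneg c) hker hη
    _ = c := Real.sq_sqrt hc

lemma mu_posPart_add_le {A B : H →L[ℂ] H} (hA : IsSelfAdjoint A) (hB : IsSelfAdjoint B)
    (j k : ℕ) : mu (A + B)⁺ (j + k) ≤ mu A⁺ j + mu B⁺ k := by
  refine le_of_forall_pos_le_add fun ε hε => ?_
  obtain ⟨C, hC, hC1, hle⟩ := exists_posPart_le_conj_add (hA.add hB) hε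
  have hconj : C * (A + B) * C ≤ C * (A⁺ + B⁺) * C :=
    hC.conjugate_le_conjugate (add_le_add (CFC.le_posPart hA) (CFC.le_posPart hB))
  have hε1 : ‖algebraMap ℝ (H →L[ℂ] H) ε‖ ≤ ε := by
    rw [norm_algebraMap, Real.norm_of_nonneg hε.le]
    exact mul_le_of_le_one_right hε.le ContinuousLinearMap.norm_id_le
  have hpos : (A + B)⁺ ≤ C * (A⁺ + B⁺) * C + algebraMap ℝ _ ε :=
    hle.trans (add_le_add_left hconj _)
  calc mu (A + B)⁺ (j + k) ≤ mu (C * (A⁺ + B⁺) * C + algebraMap ℝ _ ε) (j + k) :=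
        mu_le_mu (CFC.posPart_nonneg (A + B)) hpos _
    _ ≤ mu (C * (A⁺ + B⁺) * C) (j + k) + ε :=
        (mu_add_le_add_norm _ _ _).trans (add_le_add_right hε1 _)
    _ ≤ mu (A⁺ + B⁺) (j + k) + ε := add_le_add_left (mu_mul_mul_le hC1 hC1 _ _) _
    _ ≤ mu A⁺ j + mu B⁺ k + ε := add_le_add_left (mu_add_le _ _ _ _) _

theorem lamPM_add_le_general
    (A B : H →L[ℂ] H) (hA : IsSelfAdjoint A) (hB : IsSelfAdjoint B)
    (j k : ℕ) :
    lamP (A + B) (j + k) ≤ lamP A j + lamP B k ∧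
    lamM (A + B) (j + k) ≤ lamM A j + lamM B k := by
  refine ⟨mu_posPart_add_le hA hB j k, ?_⟩
  simpa only [lamM, ← CFC.posPart_neg, neg_add] using mu_posPart_add_le hA.neg hB.neg j k

/-- Ky Fan inequality for positive/negative eigenvalues of selfadjoint compact operators:
`λ±_{j+k}(A+B) ≤ λ±_j(A) + λ±_k(B)`. -/
theorem lamPM_add_le [SecondCountableTopology H]
    (A B : H →L[ℂ] H) (hA : IsSelfAdjoint A) (hB : IsSelfAdjoint B)
    (hAc : IsCompactOperator ⇑A) (hBc : IsCompactOperator ⇑B) (j k : ℕ) :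
    lamP (A + B) (j + k) ≤ lamP A j + lamP B k ∧
    lamM (A + B) (j + k) ≤ lamM A j + lamM B k :=
  lamPM_add_le_general A B hA hB j k
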